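/- arXiv:2605.06034 — 3 statements merged into one kernel-verified Lean document; each statement's English description precedes it below -/
import Mathlib

section
/- For every positive integer i, the series ∑_{k=1}^∞ H_k/(k(i+k)) converges and equals H_i^{(2)}/(2i) + H_i^2/(2i) - H_i/i^2 + ζ(2)/i, where ζ(2) = π²/6. -/
/-!
Since `1 / (k (k + i)) = (1 / k - 1 / (k + i)) / i`, it suffices to evaluate
`F i = ∑ₖ H_k (1 / k - 1 / (k + i))`. Summation by parts turns the increment
`F (i + 1) - F i = ∑ₖ H_k (1 / (k + i) - 1 / (k + i + 1))` into `∑ₖ 1 / (k (k + i))`,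
which is `ζ(2)` for `i = 0` and telescopes to `H_i / i` for `i ≥ 1`. Hence
`F (i + 1) = ζ(2) + ∑_{j ≤ i} H_j / j = ζ(2) + (H_i² + H_i^{(2)}) / 2`.
-/

open Finset Real

noncomputable def H (k : ℕ) : ℝ := ∑ j ∈ Finset.range k, (1 : ℝ) / ((j : ℝ) + 1)
noncomputable def H2 (k : ℕ) : ℝ := ∑ j ∈ Finset.range k, (1 : ℝ) / ((j : ℝ) + 1) ^ 2
noncomputable def H3 (k : ℕ) : ℝ := ∑ j ∈ Finset.range k, (1 : ℝ) / ((j : ℝ) + 1) ^ 3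
noncomputable def h (k : ℕ) : ℝ := ∑ j ∈ Finset.range k, (1 : ℝ) / (2 * (j : ℝ) + 1)
noncomputable def h2 (k : ℕ) : ℝ := ∑ j ∈ Finset.range k, (1 : ℝ) / (2 * (j : ℝ) + 1) ^ 2
noncomputable def h3 (k : ℕ) : ℝ := ∑ j ∈ Finset.range k, (1 : ℝ) / (2 * (j : ℝ) + 1) ^ 3
noncomputable def zeta (s : ℕ) : ℝ := ∑' n : ℕ, (1 : ℝ) / ((n : ℝ) + 1) ^ s

open Filter Topology

lemma H_succ (k : ℕ) : H (k + 1) = H k + 1 / ((k : ℝ) + 1) := sum_range_succ _ _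

lemma H2_succ (k : ℕ) : H2 (k + 1) = H2 k + 1 / ((k : ℝ) + 1) ^ 2 := sum_range_succ _ _

lemma H_nonneg (k : ℕ) : 0 ≤ H k := sum_nonneg fun _ _ => by positivity

lemma tendsto_H_div_atTop : Tendsto (fun n : ℕ => H n / n) atTop (𝓝 0) :=
  tendsto_one_div_add_atTop_nhds_zero_nat.cesaro.congr fun n => by rw [H, div_eq_inv_mul]

lemma tendsto_H_mul_one_div_add (j : ℕ) :
    Tendsto (fun n : ℕ => H n * (1 / ((n : ℝ) + 1 + j))) atTop (𝓝 0) := by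
  refine squeeze_zero' (.of_forall fun n => by have := H_nonneg n; positivity) ?_
    tendsto_H_div_atTop
  filter_upwards [eventually_gt_atTop 0] with n hn
  rw [mul_one_div]
  exact div_le_div_of_nonneg_left (H_nonneg n) (by exact_mod_cast hn) (by linarith)

lemma hasSum_sub_succ_of_antitone {b : ℕ → ℝ} (hb : Antitone b)
    (hlim : Tendsto b atTop (𝓝 0)) : HasSum (fun k => b k - b (k + 1)) (b 0) := by
  rw [hasSum_iff_tendsto_nat_of_nonneg fun k => sub_nonneg.2 (hb k.le_succ)]
  simp_rw [sum_range_sub']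
  simpa using tendsto_const_nhds.sub hlim

lemma sum_range_H_succ_mul_sub (a : ℕ → ℝ) (N : ℕ) :
    ∑ k ∈ range N, H (k + 1) * (a k - a (k + 1))
      = ∑ k ∈ range N, a k / ((k : ℝ) + 1) - H N * a N := by
  induction N with
  | zero => simp [H]
  | succ N ih =>
    rw [sum_range_succ, ih, sum_range_succ, H_succ]
    field_simp
    ring

lemma hasSum_H_succ_mul_sub {a : ℕ → ℝ} (ha : Antitone a)
    (hlim : Tendsto (fun n => H n * a n) atTop (𝓝 0)) {s : ℝ}
    (hs : HasSum (fun k => a k / ((k : ℝ) + 1)) s) :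
    HasSum (fun k => H (k + 1) * (a k - a (k + 1))) s := by
  rw [hasSum_iff_tendsto_nat_of_nonneg
    fun k => mul_nonneg (H_nonneg _) (sub_nonneg.2 (ha k.le_succ))]
  simp_rw [sum_range_H_succ_mul_sub]
  simpa using hs.tendsto_sum_nat.sub hlim

lemma antitone_one_div_add (c : ℝ) (hc : 0 ≤ c) :
    Antitone fun k : ℕ => 1 / ((k : ℝ) + 1 + c) := fun m n hmn => by
  have : (m : ℝ) ≤ n := by exact_mod_cast hmn
  dsimp only
  gcongr

lemma hasSum_one_div_sub_one_div_add (i : ℕ) :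
    HasSum (fun k : ℕ => 1 / ((k : ℝ) + 1) - 1 / ((k : ℝ) + 1 + i)) (H i) := by
  induction i with
  | zero => simp [H]
  | succ i ih =>
    have htel := hasSum_sub_succ_of_antitone (antitone_one_div_add i i.cast_nonneg)
      (tendsto_one_div_add_atTop_nhds_zero_nat.comp (tendsto_add_atTop_nat i) |>.congr
        fun n => by simp [add_right_comm])
    rw [H_succ, show (1 : ℝ) / ((i : ℝ) + 1) = 1 / ((0 : ℕ) + 1 + (i : ℝ)) by simp [add_comm]]
    exact (ih.add htel).congr_fun fun k => by push_cast; ring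

lemma hasSum_one_div_mul_add {i : ℕ} (hi : 0 < i) :
    HasSum (fun k : ℕ => 1 / (((k : ℝ) + 1) * ((k : ℝ) + 1 + i))) (H i / i) := by
  have : (i : ℝ) ≠ 0 := by positivity
  exact ((hasSum_one_div_sub_one_div_add i).div_const (i : ℝ)).congr_fun fun k => by
    field_simp
    ring

lemma hasSum_H_succ_mul_shift (j : ℕ) {s : ℝ}
    (hs : HasSum (fun k : ℕ => 1 / (((k : ℝ) + 1) * ((k : ℝ) + 1 + j))) s) :
    HasSum (fun k : ℕ => H (k + 1) * (1 / ((k : ℝ) + 1 + j) - 1 / ((k : ℝ) + 1 + (j + 1)))) s := by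
  convert hasSum_H_succ_mul_sub (antitone_one_div_add j j.cast_nonneg)
    (tendsto_H_mul_one_div_add j) (hs.congr_fun fun k => by field_simp) using 3 with k
  push_cast
  ring

lemma hasSum_H_succ_mul_one_div_sub (i : ℕ) :
    HasSum (fun k : ℕ => H (k + 1) * (1 / ((k : ℝ) + 1) - 1 / ((k : ℝ) + 1 + (i + 1))))
      (π ^ 2 / 6 + (H i ^ 2 + H2 i) / 2) := by
  induction i with
  | zero =>
    have hζ := (hasSum_nat_add_iff' 1).mpr hasSum_zeta_two
    simpa [H, H2] using hasSum_H_succ_mul_shift 0 (s := π ^ 2 / 6) (by simpa [sq] using hζ)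
  | succ i ih =>
    have step := hasSum_H_succ_mul_shift (i + 1) (hasSum_one_div_mul_add i.succ_pos)
    have hval : π ^ 2 / 6 + (H (i + 1) ^ 2 + H2 (i + 1)) / 2
        = π ^ 2 / 6 + (H i ^ 2 + H2 i) / 2 + H (i + 1) / ((i + 1 : ℕ) : ℝ) := by
      rw [H_succ, H2_succ]
      push_cast
      field_simp
      ring
    rw [hval]
    exact (ih.add step).congr_fun fun k => by push_cast; ring

theorem stmt0 (i : ℕ) (hi : 0 < i) :
    HasSum (fun k : ℕ => H (k + 1) / (((k : ℝ) + 1) * ((i : ℝ) + ((k : ℝ) + 1))))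
      (H2 i / (2 * (i : ℝ)) + (H i) ^ 2 / (2 * (i : ℝ)) - H i / (i : ℝ) ^ 2
        + (Real.pi ^ 2 / 6) / (i : ℝ)) := by
  obtain ⟨m, rfl⟩ := Nat.exists_eq_succ_of_ne_zero hi.ne'
  have hval : H2 (m + 1) / (2 * ((m + 1 : ℕ) : ℝ)) + H (m + 1) ^ 2 / (2 * ((m + 1 : ℕ) : ℝ))
      - H (m + 1) / ((m + 1 : ℕ) : ℝ) ^ 2 + π ^ 2 / 6 / ((m + 1 : ℕ) : ℝ)
      = 1 / ((m : ℝ) + 1) * (π ^ 2 / 6 + (H m ^ 2 + H2 m) / 2) := by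
    rw [H_succ, H2_succ]
    push_cast
    field_simp
    ring
  rw [hval]
  exact ((hasSum_H_succ_mul_one_div_sub m).mul_left _).congr_fun fun k => by
    push_cast
    field_simp
    ring
end

section
/- For every positive integer k, ∑_{i=1}^k h_i^{(2)}/(2i-1) = h_k^{(3)} + h_k · h_k^{(2)} - ∑_{i=1}^k h_i/(2i-1)². -/
open Finset Real

lemma h_succ (k : ℕ) : h (k + 1) = h k + 1 / (2 * (k : ℝ) + 1) := by
  simp [h, Finset.sum_range_succ]

lemma h2_succ (k : ℕ) : h2 (k + 1) = h2 k + 1 / (2 * (k : ℝ) + 1) ^ 2 := by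
  simp [h2, Finset.sum_range_succ]

lemma h3_succ (k : ℕ) : h3 (k + 1) = h3 k + 1 / (2 * (k : ℝ) + 1) ^ 3 := by
  simp [h3, Finset.sum_range_succ]

lemma key (k : ℕ) :
    ∑ j ∈ Finset.range k, h2 (j + 1) / (2 * (j : ℝ) + 1)
      = h3 k + h k * h2 k - ∑ j ∈ Finset.range k, h (j + 1) / (2 * (j : ℝ) + 1) ^ 2 := by
  induction k with
  | zero => simp [h, h2, h3]
  | succ n ih =>
    have hp : (2 * (n : ℝ) + 1) ≠ 0 := by positivity
    rw [Finset.sum_range_succ, Finset.sum_range_succ, ih, h_succ, h2_succ, h3_succ]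
    field_simp
    ring

theorem stmt2 (k : ℕ) (hk : 0 < k) :
    ∑ j ∈ Finset.range k, h2 (j + 1) / (2 * (j : ℝ) + 1)
      = h3 k + h k * h2 k - ∑ j ∈ Finset.range k, h (j + 1) / (2 * (j : ℝ) + 1) ^ 2 := key k
end

section
/- For every positive integer k, ∑_{i=1}^k h_i^{(2)}/i = H_k · h_k^{(2)} - ∑_{i=1}^k H_{i-1}/(2i-1)². -/
open Finset Real

theorem stmt3 (k : ℕ) (hk : 0 < k) :
    ∑ j ∈ Finset.range k, h2 (j + 1) / ((j : ℝ) + 1)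
      = H k * h2 k - ∑ j ∈ Finset.range k, H j / (2 * (j : ℝ) + 1) ^ 2 := by
  clear hk
  induction k with
  | zero => simp [H, h2]
  | succ n ih =>
    rw [Finset.sum_range_succ, Finset.sum_range_succ, ih,
      show H (n+1) = H n + 1/((n:ℝ)+1) from Finset.sum_range_succ _ n,
      show h2 (n+1) = h2 n + 1/(2*(n:ℝ)+1)^2 from Finset.sum_range_succ _ n]
    have h1 : (n:ℝ)+1 ≠ 0 := by positivity
    field_simp
    ring
end
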